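/- Suppose β = {β_t : t ≥ 0} is an E₀-semigroup on a factorial probability space (M,φ) with φ faithful, which is a cocycle perturbation of another E₀-semigroup α = {α_t : t ≥ 0} on (M,φ), via a cocycle {u_t : t ≥ 0} (so u_{s+t} = u_s α_s(u_t) and β_t = Ad u_t ∘ α_t). Then: (1) {j(u_t) : t ≥ 0} is a cocycle exhibiting the commutant semigroup β′ = {β′_t} as a cocycle perturbation of α′ = {α′_t}; and (2) if each α_t and each β_t is equi-modular and extendable, then {u_t j(u_t) : t ≥ 0} is a cocycle exhibiting β⁽²⁾ = {β⁽²⁾_t} as a cocycle perturbation of α⁽²⁾ = {α⁽²⁾_t} on B(L²(M,φ)). -/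

import Mathlib

/-!
Write `B(H)` for the bounded operators on `L²(M, φ)`. Because `M` is a factor, a unital normal
`*`-endomorphism `Φ` of `B(H)` is determined by its values on `M` and `M′`. Indeed, for a unit
vector `Ω` and an orthonormal basis `(fᵢ)` of the range of `Φ(|Ω⟩⟨Ω|)`, the isometries
`vᵢ ξ = Φ(|ξ⟩⟨Ω|) fᵢ` satisfy `Φ(a) vᵢ = vᵢ a`, and normality gives `∑ vᵢ vᵢ* = 1`. So
`Φ(a) = ∑ vᵢ a vᵢ*`. If `Ψ`, with isometries `wₖ`, agrees with `Φ` on `M ∪ M′`, then every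
`wₖ* vᵢ` commutes with `M ∪ M′`. It therefore lies in the centre of `M`, so it is a scalar, and
this forces `Φ = Ψ`.

For (2), apply this to `α⁽²⁾_t` and to `Ad(u_t j(u_t))* ∘ β⁽²⁾_t`. These agree on `M` because
`j(u_t) ∈ M′` commutes with `α_t(M)`. They agree on `M′` because `u_t` commutes with `j(α_t(M))`.
Part (1) only transports the cocycle identities along `j = J(·)J`, which is multiplicative,
`*`-preserving and involutive. Weak continuity survives because
`⟪j(x)ξ, η⟫ = conj ⟪x Jξ, Jη⟫`.
-/

set_option synthInstance.maxHeartbeats 400000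
set_option maxHeartbeats 1000000

open scoped InnerProductSpace ComplexConjugate

noncomputable section

namespace Paper

variable {H : Type} [NormedAddCommGroup H] [InnerProductSpace ℂ H] [CompleteSpace H]
variable {H' : Type} [NormedAddCommGroup H'] [InnerProductSpace ℂ H'] [CompleteSpace H']

/-- An operator is a (self-adjoint, idempotent) orthogonal projection. -/
def IsProjection (p : H →L[ℂ] H) : Prop := IsSelfAdjoint p ∧ p * p = p

/-- The vector state determined by a vector `Ω`. -/
def vecState (Ω : H) (x : H →L[ℂ] H) : ℂ := ⟪x Ω, Ω⟫_ℂ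

/-- A normal state on a von Neumann algebra, described via its canonical form as a
countable convex combination of vector states. -/
def IsNormalState (M : Set (H →L[ℂ] H)) (φ : (H →L[ℂ] H) → ℂ) : Prop :=
  ∃ ξ : ℕ → H, (Summable fun n => ‖ξ n‖ ^ 2) ∧ (∑' n, ‖ξ n‖ ^ 2) = 1 ∧
    ∀ x ∈ M, φ x = ∑' n, ⟪x (ξ n), ξ n⟫_ℂ

/-- Normality (complete additivity) of a map between operator algebras: it is `σ`-weakly
continuous, equivalently it preserves sums of orthogonal families of projections lying in the
given domain `S`. -/
def IsNormalMapOn (S : Set (H →L[ℂ] H)) (Θ : (H →L[ℂ] H) → (H' →L[ℂ] H')) : Prop :=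
  ∀ {ι : Type} (p : ι → (H →L[ℂ] H)) (q : H →L[ℂ] H),
    (∀ i, p i ∈ S) → q ∈ S →
    (∀ i, IsProjection (p i)) → (∀ i k, i ≠ k → p i * p k = 0) →
    (∀ ξ : H, HasSum (fun i => p i ξ) (q ξ)) →
    ∀ ξ : H', HasSum (fun i => Θ (p i) ξ) (Θ q ξ)

/-- `Θ` is a `*`-homomorphism on the subset `S` (typically a von Neumann algebra). -/
structure IsStarHomOn (S : Set (H →L[ℂ] H)) (Θ : (H →L[ℂ] H) → (H' →L[ℂ] H')) : Prop where
  map_add : ∀ x ∈ S, ∀ y ∈ S, Θ (x + y) = Θ x + Θ y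
  map_smul : ∀ (c : ℂ), ∀ x ∈ S, Θ (c • x) = c • Θ x
  map_mul : ∀ x ∈ S, ∀ y ∈ S, Θ (x * y) = Θ x * Θ y
  map_star : ∀ x ∈ S, Θ (star x) = star (Θ x)

/-- The (self-adjoint part of the) center of `S` is trivial. -/
def IsFactorSet (S : Set (H →L[ℂ] H)) : Prop :=
  ∀ x ∈ S, (∀ y ∈ S, x * y = y * x) → ∃ c : ℂ, x = c • (1 : H →L[ℂ] H)

/-- A type `I` factor: a factor possessing a minimal projection. -/
def IsTypeIFactorSet (S : Set (H →L[ℂ] H)) : Prop :=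
  IsFactorSet S ∧ ∃ p ∈ S, p ≠ 0 ∧ IsProjection p ∧
    ∀ q ∈ S, IsProjection q → q * p = q → q = 0 ∨ q = p

/-- `z` is the central support of the normal state `φ` of the von Neumann algebra `S`, i.e. the
smallest central projection of full measure. -/
structure IsCentralSupport (S : Set (H →L[ℂ] H)) (φ : (H →L[ℂ] H) → ℂ) (z : H →L[ℂ] H) :
    Prop where
  mem : z ∈ S
  proj : IsProjection z
  central : ∀ y ∈ S, z * y = y * z
  full : φ z = 1
  min : ∀ w ∈ S, IsProjection w → (∀ y ∈ S, w * y = y * w) → φ w = 1 → z * w = z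

/-- The von Neumann algebra generated by a (self-adjoint) set of operators. -/
def vN (S : Set (H →L[ℂ] H)) : Set (H →L[ℂ] H) := Set.centralizer (Set.centralizer S)

/-- Standard form data for a von Neumann algebra `M` with cyclic separating unit vector `Ω`:
`J` is the modular conjugation (an antiunitary involution fixing `Ω`, conjugating `M` onto its
commutant, and positive on the cone `{x j(x) Ω}`), and `j = J (·) J`. -/
structure StandardForm (M : VonNeumannAlgebra H) (Ω : H) (J : H → H)
    (j : (H →L[ℂ] H) → (H →L[ℂ] H)) : Prop where
  unit : ‖Ω‖ = 1
  cyclic : Dense {ξ : H | ∃ x ∈ M, x Ω = ξ}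
  separating : ∀ x ∈ M, x Ω = 0 → x = 0
  Jadd : ∀ ξ η : H, J (ξ + η) = J ξ + J η
  Jsmul : ∀ (c : ℂ) (ξ : H), J (c • ξ) = (starRingEnd ℂ) c • J ξ
  Jinvol : ∀ ξ : H, J (J ξ) = ξ
  Jinner : ∀ ξ η : H, ⟪J ξ, J η⟫_ℂ = ⟪η, ξ⟫_ℂ
  JΩ : J Ω = Ω
  jdef : ∀ (x : H →L[ℂ] H) (ξ : H), j x ξ = J (x (J ξ))
  jmapsTo : ∀ x ∈ M, j x ∈ Set.centralizer (M : Set (H →L[ℂ] H))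
  jsurj : ∀ y ∈ Set.centralizer (M : Set (H →L[ℂ] H)), ∃ x ∈ M, j x = y
  pos : ∀ x ∈ M, 0 ≤ (⟪(x * j x) Ω, Ω⟫_ℂ).re ∧ (⟪(x * j x) Ω, Ω⟫_ℂ).im = 0

/-- A unital `*`-endomorphism of `M` preserving the (faithful, normal) vector state of `Ω`. -/
structure StateEndo (M : VonNeumannAlgebra H) (Ω : H)
    (θ : (H →L[ℂ] H) → (H →L[ℂ] H)) : Prop where
  mapsTo : Set.MapsTo θ (M : Set (H →L[ℂ] H)) (M : Set (H →L[ℂ] H))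
  unital : θ 1 = 1
  hom : IsStarHomOn (M : Set (H →L[ℂ] H)) θ
  state : ∀ x ∈ M, ⟪θ x Ω, Ω⟫_ℂ = ⟪x Ω, Ω⟫_ℂ

/-- `u` is the isometry of the GNS space implementing `θ`:  `u x Ω = θ(x) Ω`. -/
def Implements (M : VonNeumannAlgebra H) (Ω : H) (θ : (H →L[ℂ] H) → (H →L[ℂ] H))
    (u : H →L[ℂ] H) : Prop :=
  (∀ ξ : H, ‖u ξ‖ = ‖ξ‖) ∧ ∀ x ∈ M, u (x Ω) = θ x Ω

/-- `u` commutes with the modular conjugation `J`. -/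
def CommutesWithJ (J : H → H) (u : H →L[ℂ] H) : Prop := ∀ ξ : H, u (J ξ) = J (u ξ)

/-- `θ` is equi-modular: its implementing isometry commutes with `J`. -/
def EquiModular (M : VonNeumannAlgebra H) (Ω : H) (J : H → H)
    (θ : (H →L[ℂ] H) → (H →L[ℂ] H)) : Prop :=
  ∃ u : H →L[ℂ] H, Implements M Ω θ u ∧ CommutesWithJ J u

/-- `Θ = θ⁽²⁾` is a unital normal `*`-endomorphism of `B(L²(M,φ))` extending `θ` and
`j ∘ θ ∘ j`. -/
structure IsExtension (M : VonNeumannAlgebra H) (j : (H →L[ℂ] H) → (H →L[ℂ] H))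
    (θ : (H →L[ℂ] H) → (H →L[ℂ] H)) (Θ : (H →L[ℂ] H) → (H →L[ℂ] H)) : Prop where
  hom : IsStarHomOn (Set.univ : Set (H →L[ℂ] H)) Θ
  unital : Θ 1 = 1
  normal : IsNormalMapOn (Set.univ : Set (H →L[ℂ] H)) Θ
  onM : ∀ x ∈ M, Θ x = θ x
  onComm : ∀ x ∈ M, Θ (j x) = j (θ x)

/-- `θ` is extendable. -/
def Extendable (M : VonNeumannAlgebra H) (j : (H →L[ℂ] H) → (H →L[ℂ] H))
    (θ : (H →L[ℂ] H) → (H →L[ℂ] H)) : Prop :=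
  ∃ Θ : (H →L[ℂ] H) → (H →L[ℂ] H), IsExtension M j θ Θ

/-- An `E₀`-semigroup on the von Neumann probability space `(M, ⟨·Ω,Ω⟩)`. -/
structure IsE0Semigroup (M : VonNeumannAlgebra H) (Ω : H)
    (α : ℝ → (H →L[ℂ] H) → (H →L[ℂ] H)) : Prop where
  endo : ∀ t : ℝ, 0 ≤ t → StateEndo M Ω (α t)
  id0 : ∀ x ∈ M, α 0 x = x
  semigroup : ∀ s t : ℝ, 0 ≤ s → 0 ≤ t → ∀ x ∈ M, α s (α t x) = α (s + t) x
  weakCont : ∀ x ∈ M, ∀ ξ η : H, ContinuousOn (fun t : ℝ => ⟪α t x ξ, η⟫_ℂ) (Set.Ici 0)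

open InnerProductSpace (rankOne)

lemma star_mul_mul_conj_mul_eq {R : Type*} [Monoid R] [StarMul R] {u v x : R}
    (hu : u ∈ unitary R) (hv : v ∈ unitary R) (hvx : Commute v x) :
    star (u * v) * (u * x * star u) * (u * v) = x := by
  rw [star_mul]
  calc star v * star u * (u * x * star u) * (u * v)
      = star v * (star u * u) * x * (star u * u) * v := by simp only [mul_assoc]
    _ = x := by
      rw [Unitary.star_mul_self_of_mem hu, mul_one, mul_one,
        (commute_unitary_iff_star_left_conjugate hv).mp hvx]

lemma IsNormalMapOn.const_mul_mul {S : Set (H →L[ℂ] H)} {Θ : (H →L[ℂ] H) → (H →L[ℂ] H)}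
    (hΘ : IsNormalMapOn S Θ) (a b : H →L[ℂ] H) : IsNormalMapOn S fun x => a * Θ x * b :=
  fun p q hp hq hproj horth hsum ξ => by
    simpa only [mul_apply_eq_comp] using (hΘ p q hp hq hproj horth hsum (b ξ)).mapL a

namespace IsStarHomOn

variable {Θ : (H →L[ℂ] H) → (H →L[ℂ] H)}

def toStarAlgHom (hΘ : IsStarHomOn Set.univ Θ) (h1 : Θ 1 = 1) :
    (H →L[ℂ] H) →⋆ₐ[ℂ] (H →L[ℂ] H) where
  toFun := Θ
  map_one' := h1
  map_mul' x y := hΘ.map_mul x trivial y trivial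
  map_zero' := by simpa using hΘ.map_smul 0 0 trivial
  map_add' x y := hΘ.map_add x trivial y trivial
  commutes' c := by simpa [Algebra.algebraMap_eq_smul_one, h1] using hΘ.map_smul c 1 trivial
  map_star' x := hΘ.map_star x trivial

end IsStarHomOn

namespace StandardForm

variable {M : VonNeumannAlgebra H} {Ω : H} {J : H → H} {j : (H →L[ℂ] H) → (H →L[ℂ] H)}

lemma map_mul (hSF : StandardForm M Ω J j) (x y : H →L[ℂ] H) : j (x * y) = j x * j y := by
  ext ξ
  simp only [mul_apply_eq_comp, hSF.jdef, hSF.Jinvol]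

lemma map_one (hSF : StandardForm M Ω J j) : j 1 = 1 := by
  ext ξ
  simp only [hSF.jdef, one_apply_eq_self, hSF.Jinvol]

lemma map_map (hSF : StandardForm M Ω J j) (x : H →L[ℂ] H) : j (j x) = x := by
  ext ξ
  simp only [hSF.jdef, hSF.Jinvol]

lemma inner_map_apply (hSF : StandardForm M Ω J j) (x : H →L[ℂ] H) (ξ η : H) :
    ⟪j x ξ, η⟫_ℂ = ⟪J η, x (J ξ)⟫_ℂ := by
  rw [hSF.jdef, ← hSF.Jinner, hSF.Jinvol]

lemma map_star (hSF : StandardForm M Ω J j) (x : H →L[ℂ] H) : j (star x) = star (j x) := by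
  refine ContinuousLinearMap.ext fun ξ => ext_inner_right ℂ fun η => ?_
  rw [hSF.inner_map_apply, ContinuousLinearMap.star_eq_adjoint,
    ContinuousLinearMap.adjoint_inner_right, ContinuousLinearMap.star_eq_adjoint,
    ContinuousLinearMap.adjoint_inner_left, ← inner_conj_symm ξ, hSF.inner_map_apply,
    inner_conj_symm]

lemma map_mem_unitary (hSF : StandardForm M Ω J j) {u : H →L[ℂ] H}
    (hu : u ∈ unitary (H →L[ℂ] H)) : j u ∈ unitary (H →L[ℂ] H) := by
  rw [Unitary.mem_iff, ← hSF.map_star, ← hSF.map_mul, ← hSF.map_mul,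
    Unitary.star_mul_self_of_mem hu, Unitary.mul_star_self_of_mem hu, hSF.map_one]
  exact ⟨rfl, rfl⟩

lemma map_mem_of_mem_centralizer (hSF : StandardForm M Ω J j) {y : H →L[ℂ] H}
    (hy : y ∈ Set.centralizer (M : Set (H →L[ℂ] H))) : j y ∈ M := by
  obtain ⟨x, hxM, rfl⟩ := hSF.jsurj y hy
  rwa [hSF.map_map]

lemma continuousOn_inner_map_apply (hSF : StandardForm M Ω J j) {u : ℝ → (H →L[ℂ] H)}
    {s : Set ℝ} (hu : ∀ ξ η : H, ContinuousOn (fun t => ⟪u t ξ, η⟫_ℂ) s) (ξ η : H) :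
    ContinuousOn (fun t => ⟪j (u t) ξ, η⟫_ℂ) s := by
  simp_rw [hSF.inner_map_apply, ← inner_conj_symm (J η)]
  exact Complex.continuous_conj.comp_continuousOn (hu (J ξ) (J η))

lemma eqOn_of_map_mul (hSF : StandardForm M Ω J j)
    {θ Θ : (H →L[ℂ] H) → (H →L[ℂ] H)} (hθ1 : θ 1 = 1)
    (hΘ : ∀ x ∈ M, ∀ y ∈ Set.centralizer (M : Set (H →L[ℂ] H)),
      Θ (x * y) = θ x * j (θ (j y))) :
    Set.EqOn Θ θ M ∧ Set.EqOn Θ (fun y => j (θ (j y))) (Set.centralizer M) := by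
  refine ⟨fun x hx => ?_, fun y hy => ?_⟩
  · simpa [hSF.map_one, hθ1] using hΘ x hx 1 Set.one_mem_centralizer
  · simpa [hθ1] using hΘ 1 (one_mem M) y hy

end StandardForm

lemma exists_orthonormal_hasSum_of_isStarProjection {P : H →L[ℂ] H}
    (hP : IsStarProjection P) :
    ∃ (ι : Type) (f : ι → H), Orthonormal ℂ f ∧ (∀ i, P (f i) = f i) ∧
      ∀ ζ, HasSum (fun i => ⟪f i, ζ⟫_ℂ • f i) (P ζ) := by
  have :=
    (ContinuousLinearMap.IsIdempotentElem.isClosed_range hP.isIdempotentElem).completeSpace_coe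
  obtain ⟨w, b, -⟩ := exists_hilbertBasis ℂ P.range
  have hfix (i : w) : P (b i) = b i := by
    obtain ⟨ξ, hξ⟩ := (b i).2
    rw [← hξ, ContinuousLinearMap.coe_coe, ← mul_apply_eq_comp, hP.isIdempotentElem.eq]
  refine ⟨w, fun i => b i, b.orthonormal.comp_linearIsometry (Submodule.subtypeₗᵢ _), hfix,
    fun ζ => ?_⟩
  convert (b.hasSum_repr ⟨P ζ, LinearMap.mem_range_self P ζ⟩).mapL (Submodule.subtypeL _)
    using 2 with i
  · rw [map_smul, b.repr_apply_apply, Submodule.coe_inner, Submodule.subtypeL_apply]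
    congr 1
    simpa [hfix] using hP.isSelfAdjoint.isSymmetric (b i) ζ
  · rfl

section Intertwiner

variable (Φ : (H →L[ℂ] H) →⋆ₐ[ℂ] (H →L[ℂ] H))

def intertwiner (Ω f : H) : H →L[ℂ] H :=
  LinearMap.mkContinuous
    { toFun := fun ξ => Φ (rankOne ℂ ξ Ω) f
      map_add' := fun ξ η => by simp
      map_smul' := fun c ξ => by simp }
    (‖Ω‖ * ‖f‖) fun ξ => by
      calc ‖Φ (rankOne ℂ ξ Ω) f‖ ≤ ‖Φ (rankOne ℂ ξ Ω)‖ * ‖f‖ := ContinuousLinearMap.le_opNorm _ _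
        _ ≤ ‖rankOne ℂ ξ Ω‖ * ‖f‖ := by
          gcongr; exact NonUnitalStarAlgHom.norm_apply_le Φ _
        _ = ‖Ω‖ * ‖f‖ * ‖ξ‖ := by rw [InnerProductSpace.norm_rankOne]; ring

variable {Φ}

@[simp] lemma intertwiner_apply (Ω f ξ : H) : intertwiner Φ Ω f ξ = Φ (rankOne ℂ ξ Ω) f := rfl

lemma map_mul_intertwiner (Ω f : H) (a : H →L[ℂ] H) :
    Φ a * intertwiner Φ Ω f = intertwiner Φ Ω f * a := by
  ext ξ
  change Φ a (Φ (rankOne ℂ ξ Ω) f) = Φ (rankOne ℂ (a ξ) Ω) f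
  rw [← InnerProductSpace.comp_rankOne, ← ContinuousLinearMap.mul_def, map_mul]
  rfl

lemma inner_intertwiner_apply (Ω f f' ξ η : H) :
    ⟪intertwiner Φ Ω f ξ, intertwiner Φ Ω f' η⟫_ℂ =
      ⟪ξ, η⟫_ℂ * ⟪f, Φ (rankOne ℂ Ω Ω) f'⟫_ℂ := by
  rw [intertwiner_apply, intertwiner_apply, ← ContinuousLinearMap.adjoint_inner_right,
    ← ContinuousLinearMap.star_eq_adjoint, ← mul_apply_eq_comp, ← map_star, ← map_mul,
    ContinuousLinearMap.star_eq_adjoint, InnerProductSpace.adjoint_rankOne,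
    ContinuousLinearMap.mul_def, InnerProductSpace.rankOne_comp_rankOne, map_smul,
    smul_apply, inner_smul_right]

lemma map_rankOne_self_apply {Ω : H} (hΩ : ‖Ω‖ = 1) (g ξ : H) :
    Φ (rankOne ℂ g g) ξ = Φ (rankOne ℂ g Ω) (Φ (rankOne ℂ Ω Ω) (Φ (rankOne ℂ Ω g) ξ)) := by
  have hΩΩ : ⟪Ω, Ω⟫_ℂ = 1 := by simp [inner_self_eq_norm_sq_to_K, hΩ]
  have hfactor : rankOne ℂ g g = rankOne ℂ g Ω * (rankOne ℂ Ω Ω * rankOne ℂ Ω g) := by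
    simp only [ContinuousLinearMap.mul_def, InnerProductSpace.rankOne_comp_rankOne, hΩΩ,
      one_smul]
  rw [hfactor, map_mul, map_mul]
  rfl

lemma hasSum_map_rankOne_self_apply {Ω : H} (hΩ : ‖Ω‖ = 1) {ι : Type} {f : ι → H}
    (hf : ∀ ζ, HasSum (fun i => ⟪f i, ζ⟫_ℂ • f i) (Φ (rankOne ℂ Ω Ω) ζ)) (g ξ : H) :
    HasSum (fun i => ⟪intertwiner Φ Ω (f i) g, ξ⟫_ℂ • intertwiner Φ Ω (f i) g)
      (Φ (rankOne ℂ g g) ξ) := by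
  rw [map_rankOne_self_apply hΩ]
  convert (hf _).mapL (Φ (rankOne ℂ g Ω)) using 2 with i
  rw [map_smul, intertwiner_apply]
  congr 1
  rw [← ContinuousLinearMap.adjoint_inner_left, ← ContinuousLinearMap.star_eq_adjoint, ← map_star,
    ContinuousLinearMap.star_eq_adjoint, InnerProductSpace.adjoint_rankOne]

lemma hasSum_map_rankOne_hilbertBasis (hΦ : IsNormalMapOn Set.univ ⇑Φ) {s : Type}
    (g : HilbertBasis s ℂ H) (ξ : H) :
    HasSum (fun m => Φ (rankOne ℂ (g m) (g m)) ξ) ξ := by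
  have hproj (m : s) : IsProjection (rankOne ℂ (g m) (g m)) :=
    have h := InnerProductSpace.isStarProjection_rankOne_self (𝕜 := ℂ) (g.orthonormal.1 m)
    ⟨h.isSelfAdjoint, h.isIdempotentElem⟩
  have horth (m l : s) (hml : m ≠ l) : rankOne ℂ (g m) (g m) * rankOne ℂ (g l) (g l) = 0 := by
    rw [ContinuousLinearMap.mul_def, InnerProductSpace.rankOne_comp_rankOne,
      g.orthonormal.2 hml, zero_smul]
  have hsum (ζ : H) : HasSum (fun m => rankOne ℂ (g m) (g m) ζ) ((1 : H →L[ℂ] H) ζ) := by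
    simpa [g.repr_apply_apply] using g.hasSum_repr ζ
  simpa using hΦ _ 1 (fun _ => trivial) trivial hproj horth hsum ξ

lemma orthonormal_intertwiner_apply {Ω : H} {ι s : Type} {f : ι → H} (hf : Orthonormal ℂ f)
    (hPf : ∀ i, Φ (rankOne ℂ Ω Ω) (f i) = f i) {g : s → H} (hg : Orthonormal ℂ g) :
    Orthonormal ℂ fun p : ι × s => intertwiner Φ Ω (f p.1) (g p.2) := by
  classical
  rw [orthonormal_iff_ite] at hf hg ⊢
  rintro ⟨i, m⟩ ⟨k, l⟩
  rw [inner_intertwiner_apply, hPf, hf, hg]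
  by_cases hik : i = k <;> by_cases hml : m = l <;> simp [hik, hml]

lemma top_le_closure_span_intertwiner_apply (hΦ : IsNormalMapOn Set.univ ⇑Φ) {Ω : H}
    (hΩ : ‖Ω‖ = 1) {ι s : Type} {f : ι → H}
    (hf : ∀ ζ, HasSum (fun i => ⟪f i, ζ⟫_ℂ • f i) (Φ (rankOne ℂ Ω Ω) ζ))
    (g : HilbertBasis s ℂ H) :
    ⊤ ≤ (Submodule.span ℂ
      (Set.range fun p : ι × s => intertwiner Φ Ω (f p.1) (g p.2))).topologicalClosure := by
  set K := (Submodule.span ℂ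
    (Set.range fun p : ι × s => intertwiner Φ Ω (f p.1) (g p.2))).topologicalClosure
  have hK : IsClosed (K : Set H) := Submodule.isClosed_topologicalClosure _
  intro ξ _
  rw [← (hasSum_map_rankOne_hilbertBasis hΦ g ξ).tsum_eq]
  refine tsum_mem hK fun m => ?_
  rw [← (hasSum_map_rankOne_self_apply hΩ hf (g m) ξ).tsum_eq]
  exact tsum_mem hK fun i => K.smul_mem _
    (Submodule.le_topologicalClosure _ (Submodule.subset_span ⟨(i, m), rfl⟩))

lemma hasSum_apply_star_apply_of_hilbertBasis {ι s : Type} {v : ι → (H →L[ℂ] H)}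
    (g : HilbertBasis s ℂ H) (e : HilbertBasis (ι × s) ℂ H)
    (he : ⇑e = fun p => v p.1 (g p.2)) (ξ : H) :
    HasSum (fun i => v i (star (v i) ξ)) ξ := by
  refine (e.hasSum_repr ξ).prod_fiberwise fun i => ?_
  convert (g.hasSum_repr (star (v i) ξ)).mapL (v i) using 2 with m
  rw [map_smul, e.repr_apply_apply, g.repr_apply_apply, he, ContinuousLinearMap.star_eq_adjoint,
    ContinuousLinearMap.adjoint_inner_right]

end Intertwiner

/-- A family implementing `Φ` as `Φ a = ∑ᵢ vᵢ a vᵢ*`, strongly. -/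
structure IsIntertwinerFamily (Φ : (H →L[ℂ] H) →⋆ₐ[ℂ] (H →L[ℂ] H)) {ι : Type}
    (v : ι → (H →L[ℂ] H)) : Prop where
  map_mul : ∀ i a, Φ a * v i = v i * a
  hasSum_apply_star_apply : ∀ ξ, HasSum (fun i => v i (star (v i) ξ)) ξ

theorem exists_isIntertwinerFamily {Φ : (H →L[ℂ] H) →⋆ₐ[ℂ] (H →L[ℂ] H)}
    (hΦ : IsNormalMapOn Set.univ ⇑Φ) :
    ∃ (ι : Type) (v : ι → (H →L[ℂ] H)), IsIntertwinerFamily Φ v := by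
  rcases subsingleton_or_nontrivial H with hH | hH
  · exact ⟨Empty, fun _ => 0, ⟨fun i => i.elim, fun ξ => Subsingleton.elim 0 ξ ▸ hasSum_empty⟩⟩
  obtain ⟨Ω, hΩ⟩ := exists_norm_eq H zero_le_one
  obtain ⟨ι, f, hfon, hPf, hf⟩ := exists_orthonormal_hasSum_of_isStarProjection
    ((InnerProductSpace.isStarProjection_rankOne_self hΩ).map Φ)
  obtain ⟨s, g, -⟩ := exists_hilbertBasis ℂ H
  let e := HilbertBasis.mk (orthonormal_intertwiner_apply hfon hPf g.orthonormal)
    (top_le_closure_span_intertwiner_apply hΦ hΩ hf g)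
  exact ⟨ι, fun i => intertwiner Φ Ω (f i), fun i => map_mul_intertwiner Ω (f i),
    hasSum_apply_star_apply_of_hilbertBasis g e (HilbertBasis.coe_mk _ _)⟩

namespace IsIntertwinerFamily

variable {Φ Ψ : (H →L[ℂ] H) →⋆ₐ[ℂ] (H →L[ℂ] H)} {ι κ : Type} {v : ι → (H →L[ℂ] H)}
  {w : κ → (H →L[ℂ] H)}

lemma star_mul_map (hw : IsIntertwinerFamily Ψ w) (k : κ) (a : H →L[ℂ] H) :
    star (w k) * Ψ a = a * star (w k) := by
  simpa [map_star] using congr_arg star (hw.map_mul k (star a))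

lemma commute_star_mul (hv : IsIntertwinerFamily Φ v) (hw : IsIntertwinerFamily Ψ w)
    {a : H →L[ℂ] H} (ha : Φ a = Ψ a) (k : κ) (i : ι) : Commute (star (w k) * v i) a := by
  rw [Commute, SemiconjBy, mul_assoc, ← hv.map_mul, ha, ← mul_assoc, hw.star_mul_map, mul_assoc]

lemma eq_of_forall_star_mul_eq (hw : IsIntertwinerFamily Ψ w) {x y : H →L[ℂ] H}
    (h : ∀ k, star (w k) * x = star (w k) * y) : x = y := by
  ext ξ
  refine (hw.hasSum_apply_star_apply (x ξ)).unique ?_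
  simpa only [← mul_apply_eq_comp, h] using hw.hasSum_apply_star_apply (y ξ)

lemma map_eq_of_commute (hv : IsIntertwinerFamily Φ v) (hw : IsIntertwinerFamily Ψ w)
    {a : H →L[ℂ] H} (h : ∀ k i, Commute (star (w k) * v i) a) : Φ a = Ψ a := by
  refine hw.eq_of_forall_star_mul_eq fun k => ?_
  rw [hw.star_mul_map]
  ext ξ
  refine HasSum.unique ?_ ((hv.hasSum_apply_star_apply ξ).mapL (a * star (w k)))
  convert (hv.hasSum_apply_star_apply ξ).mapL (star (w k) * Φ a) using 2 with i
  have hvi : star (w k) * Φ a * v i = a * star (w k) * v i := by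
    rw [mul_assoc, hv.map_mul, ← mul_assoc, (h k i).eq, ← mul_assoc]
  simpa only [mul_apply_eq_comp] using (DFunLike.congr_fun hvi (star (v i) ξ)).symm

end IsIntertwinerFamily

theorem starAlgHom_eq_of_eqOn_factor {M : VonNeumannAlgebra H}
    (hM : IsFactorSet (M : Set (H →L[ℂ] H))) {Φ Ψ : (H →L[ℂ] H) →⋆ₐ[ℂ] (H →L[ℂ] H)}
    (hΦ : IsNormalMapOn Set.univ ⇑Φ) (hΨ : IsNormalMapOn Set.univ ⇑Ψ)
    (hM_eq : Set.EqOn Φ Ψ M) (hM'_eq : Set.EqOn Φ Ψ (Set.centralizer M)) : Φ = Ψ := by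
  obtain ⟨ι, v, hv⟩ := exists_isIntertwinerFamily hΦ
  obtain ⟨κ, w, hw⟩ := exists_isIntertwinerFamily hΨ
  have hscalar (k : κ) (i : ι) : ∃ c : ℂ, star (w k) * v i = c • 1 := by
    have hmem : star (w k) * v i ∈ (M : Set (H →L[ℂ] H)) := by
      rw [← M.centralizer_centralizer]
      exact fun y hy => (hv.commute_star_mul hw (hM'_eq hy) k i).eq.symm
    exact hM _ hmem fun m hm => (hv.commute_star_mul hw (hM_eq hm) k i).eq
  ext1 a
  refine hv.map_eq_of_commute hw fun k i => ?_
  obtain ⟨c, hc⟩ := hscalar k i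
  exact hc ▸ (Commute.one_left a).smul_left c

theorem map_eq_conj_of_eq_conj {M : VonNeumannAlgebra H} {Ω : H} {J : H → H}
    {j : (H →L[ℂ] H) → (H →L[ℂ] H)} (hSF : StandardForm M Ω J j)
    (hM : IsFactorSet (M : Set (H →L[ℂ] H))) {θ θ' : (H →L[ℂ] H) → (H →L[ℂ] H)}
    (hθ : Set.MapsTo θ M M) {u : H →L[ℂ] H} (hu : u ∈ unitary (H →L[ℂ] H)) (huM : u ∈ M)
    (hθ' : ∀ x ∈ M, θ' x = u * θ x * star u) {Θ Θ' : (H →L[ℂ] H) →⋆ₐ[ℂ] (H →L[ℂ] H)}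
    (hΘn : IsNormalMapOn Set.univ ⇑Θ) (hΘ'n : IsNormalMapOn Set.univ ⇑Θ')
    (hΘM : Set.EqOn Θ θ M) (hΘM' : Set.EqOn Θ (fun y => j (θ (j y))) (Set.centralizer M))
    (hΘ'M : Set.EqOn Θ' θ' M)
    (hΘ'M' : Set.EqOn Θ' (fun y => j (θ' (j y))) (Set.centralizer M)) (a : H →L[ℂ] H) :
    Θ' a = u * j u * Θ a * star (u * j u) := by
  have hju := hSF.map_mem_unitary hu
  have hjuM' : j u ∈ Set.centralizer (M : Set (H →L[ℂ] H)) := hSF.jmapsTo u huM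
  let W : unitary (H →L[ℂ] H) := ⟨u * j u, Submonoid.mul_mem _ hu hju⟩
  let Φ := (Unitary.conjStarAlgAut ℂ _ (star W)).toStarAlgHom.comp Θ'
  have hΦ (x : H →L[ℂ] H) : Φ x = star (u * j u) * Θ' x * (u * j u) := by
    simp [Φ, W]
  have hΦΘ : Φ = Θ := by
    refine starAlgHom_eq_of_eqOn_factor hM (funext hΦ ▸ hΘ'n.const_mul_mul _ _) hΘn
      (fun x hx => ?_) (fun y hy => ?_)
    · rw [hΦ, hΘ'M hx, hθ' x hx, hΘM hx]
      exact star_mul_mul_conj_mul_eq hu hju (hjuM' (θ x) (hθ hx)).symm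
    · have hjy := hSF.map_mem_of_mem_centralizer hy
      rw [hΦ, hΘ'M' hy, hΘM' hy]
      simp only
      rw [hθ' _ hjy, hSF.map_mul, hSF.map_mul, hSF.map_star, hjuM' u huM]
      exact star_mul_mul_conj_mul_eq hju hu (hSF.jmapsTo _ (hθ hjy) u huM)
  have hWW : u * j u * star (u * j u) = 1 := W.prop.2
  calc Θ' a = u * j u * star (u * j u) * Θ' a * (u * j u * star (u * j u)) := by
        rw [hWW, one_mul, mul_one]
    _ = u * j u * Φ a * star (u * j u) := by simp only [hΦ, mul_assoc]
    _ = u * j u * Θ a * star (u * j u) := by rw [hΦΘ]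

/-- **Proposition 5.7.**  Suppose `β` is an `E₀`-semigroup on the factorial probability space
`(M, φ)` in standard form which is a cocycle perturbation of the `E₀`-semigroup `α` via the
unitary cocycle `{u_t} ⊆ M`.  Then (1) `{j(u_t)}` is a cocycle exhibiting `β′` as a cocycle
perturbation of `α′`; and (2) if each `α_t`, `β_t` is equi-modular and extendable, with
extensions `α⁽²⁾`, `β⁽²⁾` to `B(L²(M,φ))`, then `{u_t j(u_t)}` is a cocycle exhibiting `β⁽²⁾`
as a cocycle perturbation of `α⁽²⁾`. -/
theorem proposition_5_7
    (M : VonNeumannAlgebra H) (Ω : H) (J : H → H) (j : (H →L[ℂ] H) → (H →L[ℂ] H))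
    (hSF : StandardForm M Ω J j) (hM : IsFactorSet (M : Set (H →L[ℂ] H)))
    (α β : ℝ → (H →L[ℂ] H) → (H →L[ℂ] H))
    (hα : IsE0Semigroup M Ω α) (hβ : IsE0Semigroup M Ω β)
    -- `{u t}` is a weakly continuous unitary `α`-cocycle in `M` with `β_t = Ad u_t ∘ α_t`:
    (u : ℝ → (H →L[ℂ] H))
    (humem : ∀ t : ℝ, 0 ≤ t → u t ∈ M)
    (huunit : ∀ t : ℝ, 0 ≤ t → star (u t) * u t = 1 ∧ u t * star (u t) = 1)
    (hucoc : ∀ s t : ℝ, 0 ≤ s → 0 ≤ t → u (s + t) = u s * α s (u t))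
    (hucont : ∀ ξ η : H, ContinuousOn (fun t : ℝ => ⟪u t ξ, η⟫_ℂ) (Set.Ici 0))
    (hpert : ∀ t : ℝ, 0 ≤ t → ∀ x ∈ M, β t x = u t * α t x * star (u t)) :
    -- (1) `{j(u_t)}` exhibits `β′` as a cocycle perturbation of `α′`:
    ((∀ t : ℝ, 0 ≤ t →
        j (u t) ∈ Set.centralizer (M : Set (H →L[ℂ] H)) ∧
        star (j (u t)) * j (u t) = 1 ∧ j (u t) * star (j (u t)) = 1) ∧
      (∀ s t : ℝ, 0 ≤ s → 0 ≤ t → j (u (s + t)) = j (u s) * j (α s (u t))) ∧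
      (∀ ξ η : H, ContinuousOn (fun t : ℝ => ⟪j (u t) ξ, η⟫_ℂ) (Set.Ici 0)) ∧
      (∀ t : ℝ, 0 ≤ t → ∀ y ∈ Set.centralizer (M : Set (H →L[ℂ] H)),
        j (β t (j y)) = j (u t) * j (α t (j y)) * star (j (u t)))) ∧
    -- (2) if each `α_t` and `β_t` is equi-modular and extendable, with extensions `α⁽²⁾ = A`
    -- and `β⁽²⁾ = B`, then `{u_t j(u_t)}` exhibits `β⁽²⁾` as a cocycle perturbation of `α⁽²⁾`:
    ((∀ t : ℝ, 0 ≤ t → EquiModular M Ω J (α t) ∧ Extendable M j (α t) ∧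
        EquiModular M Ω J (β t) ∧ Extendable M j (β t)) →
      ∀ A B : ℝ → (H →L[ℂ] H) → (H →L[ℂ] H),
        (∀ t : ℝ, 0 ≤ t →
          IsStarHomOn (Set.univ : Set (H →L[ℂ] H)) (A t) ∧ A t 1 = 1 ∧
          IsNormalMapOn (Set.univ : Set (H →L[ℂ] H)) (A t) ∧
          ∀ x ∈ M, ∀ y ∈ Set.centralizer (M : Set (H →L[ℂ] H)),
            A t (x * y) = α t x * j (α t (j y))) →
        (∀ t : ℝ, 0 ≤ t →
          IsStarHomOn (Set.univ : Set (H →L[ℂ] H)) (B t) ∧ B t 1 = 1 ∧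
          IsNormalMapOn (Set.univ : Set (H →L[ℂ] H)) (B t) ∧
          ∀ x ∈ M, ∀ y ∈ Set.centralizer (M : Set (H →L[ℂ] H)),
            B t (x * y) = β t x * j (β t (j y))) →
        (∀ t : ℝ, 0 ≤ t →
          star (u t * j (u t)) * (u t * j (u t)) = 1 ∧
          (u t * j (u t)) * star (u t * j (u t)) = 1) ∧
        (∀ s t : ℝ, 0 ≤ s → 0 ≤ t →
          u (s + t) * j (u (s + t)) = (u s * j (u s)) * A s (u t * j (u t))) ∧
        ∀ t : ℝ, 0 ≤ t → ∀ a : H →L[ℂ] H,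
          B t a = (u t * j (u t)) * A t a * star (u t * j (u t))) := by
  have hu (t : ℝ) (ht : 0 ≤ t) : u t ∈ unitary (H →L[ℂ] H) := Unitary.mem_iff.mpr (huunit t ht)
  refine ⟨⟨fun t ht => ⟨hSF.jmapsTo _ (humem t ht),
      Unitary.mem_iff.mp (hSF.map_mem_unitary (hu t ht))⟩,
    fun s t hs ht => by rw [hucoc s t hs ht, hSF.map_mul],
    hSF.continuousOn_inner_map_apply hucont,
    fun t ht y hy => by
      rw [hpert t ht _ (hSF.map_mem_of_mem_centralizer hy), hSF.map_mul, hSF.map_mul,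
        hSF.map_star]⟩, ?_⟩
  intro _ A B hA hB
  refine ⟨fun t ht => Unitary.mem_iff.mp
      (Submonoid.mul_mem _ (hu t ht) (hSF.map_mem_unitary (hu t ht))),
    fun s t hs ht => ?_, fun t ht => ?_⟩
  · have hαu : α s (u t) ∈ M := (hα.endo s hs).mapsTo (humem t ht)
    rw [(hA s hs).2.2.2 _ (humem t ht) _ (hSF.jmapsTo _ (humem t ht)), hSF.map_map,
      hucoc s t hs ht, hSF.map_mul, mul_assoc, ← mul_assoc (α s (u t)),
      hSF.jmapsTo _ (humem s hs) _ hαu]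
    simp only [mul_assoc]
  · obtain ⟨hAh, hA1, hAn, hAM⟩ := hA t ht
    obtain ⟨hBh, hB1, hBn, hBM⟩ := hB t ht
    obtain ⟨hAM, hAM'⟩ := hSF.eqOn_of_map_mul (hα.endo t ht).unital hAM
    obtain ⟨hBM, hBM'⟩ := hSF.eqOn_of_map_mul (hβ.endo t ht).unital hBM
    exact map_eq_conj_of_eq_conj hSF hM (hα.endo t ht).mapsTo (hu t ht) (humem t ht)
      (hpert t ht) (Θ := hAh.toStarAlgHom hA1) (Θ' := hBh.toStarAlgHom hB1) hAn hBn hAM hAM'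
      hBM hBM'

end Paper
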